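/- arXiv:1309.0744 — 6 statements merged into one kernel-verified Lean document; each statement's English description precedes it below -/
import Mathlib

section
/- If P, Q, n are odd integers with n ≡ 3 (mod 6) and Q ≡ 3 (mod 4), then U_n(P,Q) is not a perfect square. -/
def lucasU (P Q : ℤ) : ℕ → ℤ
  | 0 => 0
  | 1 => 1
  | (n + 2) => P * lucasU P Q (n + 1) - Q * lucasU P Q n

/-!
Reduce modulo 4. There `Q ≡ -1` and `P² ≡ 1`, so `U₆ ≡ 0` and `Q U₅ ≡ -1`; by the addition formula
`U_{n+6} = U₆ U_{n+1} - Q U₅ U_n` the sequence is 6-periodic modulo 4. Hence `U_n ≡ U₃ = P² - Q ≡ 2`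
for `n ≡ 3 (mod 6)`, while squares are `0` or `1` modulo 4.
-/

theorem lucasU_add (P Q : ℤ) (m n : ℕ) :
    lucasU P Q (m + n + 1) =
      lucasU P Q (m + 1) * lucasU P Q (n + 1) - Q * lucasU P Q m * lucasU P Q n := by
  induction m using Nat.twoStepInduction with
  | zero => simp [lucasU]
  | one => simp [lucasU, add_comm 1 n]
  | more m ih₀ ih₁ =>
    calc lucasU P Q (m + 2 + n + 1)
        = P * lucasU P Q (m + 1 + n + 1) - Q * lucasU P Q (m + n + 1) := by
          rw [show m + 2 + n + 1 = (m + n + 1) + 2 by omega, lucasU,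
            show m + n + 1 + 1 = m + 1 + n + 1 by omega]
      _ = (P * lucasU P Q (m + 1 + 1) - Q * lucasU P Q (m + 1)) * lucasU P Q (n + 1)
            - Q * (P * lucasU P Q (m + 1) - Q * lucasU P Q m) * lucasU P Q n := by
          rw [ih₀, ih₁]
          ring
      _ = lucasU P Q (m + 2 + 1) * lucasU P Q (n + 1) - Q * lucasU P Q (m + 2) * lucasU P Q n :=
          rfl

section ModFour

variable {P Q : ℤ}

theorem lucasU_add_six_cast_zmod_four (hP : (P : ZMod 4) ^ 2 = 1) (hQ : (Q : ZMod 4) = 3)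
    (n : ℕ) : (lucasU P Q (n + 6) : ZMod 4) = lucasU P Q n := by
  have h₆ : (lucasU P Q 6 : ZMod 4) = 0 := by
    simp only [lucasU]
    push_cast
    rw [hQ]
    generalize (P : ZMod 4) = p at hP ⊢
    revert p
    decide
  have h₅ : (Q * lucasU P Q 5 : ZMod 4) = -1 := by
    simp only [lucasU]
    push_cast
    rw [hQ]
    generalize (P : ZMod 4) = p at hP ⊢
    revert p
    decide
  rw [show n + 6 = 5 + n + 1 by omega, lucasU_add]
  push_cast
  rw [h₆, h₅]
  ring

theorem lucasU_six_mul_add_three_cast_zmod_four (hP : (P : ZMod 4) ^ 2 = 1)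
    (hQ : (Q : ZMod 4) = 3) (m : ℕ) : (lucasU P Q (6 * m + 3) : ZMod 4) = 2 := by
  induction m with
  | zero =>
    simp only [lucasU]
    push_cast
    rw [hQ]
    generalize (P : ZMod 4) = p at hP ⊢
    revert p
    decide
  | succ m ih => rw [show 6 * (m + 1) + 3 = 6 * m + 3 + 6 by ring,
      lucasU_add_six_cast_zmod_four hP hQ, ih]

end ModFour

theorem stmt1_general (P Q : ℤ) (n : ℕ) (hP : Odd P)
    (hn6 : n % 6 = 3) (hQ4 : Q % 4 = 3) :
    ¬ ∃ k : ℤ, lucasU P Q n = k ^ 2 := by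
  rintro ⟨k, hk⟩
  have hP' : (P : ZMod 4) ^ 2 = 1 := by
    rw [← Int.cast_pow, ← ZMod.intCast_mod, Nat.cast_ofNat, Int.sq_mod_four_eq_one_of_odd hP,
      Int.cast_one]
  have hQ' : (Q : ZMod 4) = 3 := by
    rw [← ZMod.intCast_mod, Nat.cast_ofNat, hQ4]
    rfl
  have hU : (lucasU P Q n : ZMod 4) = 2 := by
    rw [← Nat.div_add_mod n 6, hn6]
    exact lucasU_six_mul_add_three_cast_zmod_four hP' hQ' _
  rw [hk, Int.cast_pow] at hU
  revert hU
  generalize (k : ZMod 4) = x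
  revert x
  decide

theorem stmt1 (P Q : ℤ) (n : ℕ) (hP : Odd P) (hQ : Odd Q) (hn : Odd n)
    (hn6 : n % 6 = 3) (hQ4 : Q % 4 = 3) :
    ¬ ∃ k : ℤ, lucasU P Q n = k ^ 2 :=
  stmt1_general P Q n hP hn6 hQ4
end

section
/- If P, Q, n are odd integers with n ≡ 5 (mod 6) and Q ≡ 1 (mod 4), then U_n(P,Q) is not a perfect square. -/
theorem lucasU_add_three (P Q : ℤ) (m : ℕ) :
    lucasU P Q (m + 3) = (P ^ 2 - Q) * lucasU P Q (m + 1) - P * Q * lucasU P Q m := by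
  rw [lucasU, lucasU]
  ring

section CommRing

variable {R : Type*} [CommRing R] {P Q : ℤ}

theorem intCast_lucasU_add_three (hP : (P : R) ^ 2 = 1) (hQ : (Q : R) = 1) (m : ℕ) :
    (lucasU P Q (m + 3) : R) = -P * lucasU P Q m := by
  rw [lucasU_add_three]
  push_cast
  rw [hP, hQ]
  ring

theorem intCast_lucasU_add_six (hP : (P : R) ^ 2 = 1) (hQ : (Q : R) = 1) (m : ℕ) :
    (lucasU P Q (m + 6) : R) = lucasU P Q m := by
  rw [intCast_lucasU_add_three hP hQ (m + 3), intCast_lucasU_add_three hP hQ]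
  linear_combination (lucasU P Q m : R) * hP

theorem intCast_lucasU_six_mul_add_five (hP : (P : R) ^ 2 = 1) (hQ : (Q : R) = 1) (j : ℕ) :
    (lucasU P Q (6 * j + 5) : R) = -1 := by
  induction j with
  | zero =>
    rw [intCast_lucasU_add_three hP hQ 2]
    simp only [lucasU]
    push_cast
    linear_combination -hP
  | succ j ih => rw [show 6 * (j + 1) + 5 = 6 * j + 5 + 6 by ring, intCast_lucasU_add_six hP hQ, ih]

end CommRing

theorem intCast_zmod_four_eq_one {a : ℤ} (h : a % 4 = 1) : (a : ZMod 4) = 1 := by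
  rw [← ZMod.intCast_mod, Nat.cast_ofNat, h, Int.cast_one]

theorem ZMod.sq_ne_neg_one_four (x : ZMod 4) : x ^ 2 ≠ -1 := by
  decide +revert

theorem stmt2_general (P Q : ℤ) (n : ℕ) (hP : Odd P)
    (hn6 : n % 6 = 5) (hQ4 : Q % 4 = 1) :
    ¬ ∃ k : ℤ, lucasU P Q n = k ^ 2 := by
  rintro ⟨k, hk⟩
  obtain ⟨j, rfl⟩ : ∃ j, n = 6 * j + 5 := ⟨n / 6, by omega⟩
  have hP2 : (P : ZMod 4) ^ 2 = 1 := by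
    exact_mod_cast intCast_zmod_four_eq_one (Int.sq_mod_four_eq_one_of_odd hP)
  have hU := intCast_lucasU_six_mul_add_five hP2 (intCast_zmod_four_eq_one hQ4) j
  rw [hk, Int.cast_pow] at hU
  exact ZMod.sq_ne_neg_one_four _ hU

theorem stmt2 (P Q : ℤ) (n : ℕ) (hP : Odd P) (hQ : Odd Q) (hn : Odd n)
    (hn6 : n % 6 = 5) (hQ4 : Q % 4 = 1) :
    ¬ ∃ k : ℤ, lucasU P Q n = k ^ 2 :=
  stmt2_general P Q n hP hn6 hQ4
end

section
/- If P is odd, n is odd with n ≥ 3, and Q ≡ 2 (mod 4), then U_n(P,Q) ≡ 3 (mod 4); in particular U_n(P,Q) is not a perfect square. -/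
/-!
Modulo 4 the recurrence reads `U (n + 2) = P U (n + 1) - 2 U n` with `P ^ 2 = 1`, and from `U 2 = P`,
`U 3 = P ^ 2 - Q = 3` one checks that the pair `(U (2k+2), U (2k+3))` stays equal to `(P, 3)`.
Since squares are `0` or `1` modulo 4, no odd-indexed term past `U 1` is a square.
-/

theorem lucasU_add_two (P Q : ℤ) (n : ℕ) :
    lucasU P Q (n + 2) = P * lucasU P Q (n + 1) - Q * lucasU P Q n := rfl

theorem ZMod.intCast_sq_eq_one_of_odd {P : ℤ} (hP : Odd P) : (P : ZMod 4) ^ 2 = 1 := by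
  exact_mod_cast (ZMod.intCast_eq_intCast_iff' (P ^ 2) 1 4).mpr (Int.sq_mod_four_eq_one_of_odd hP)

theorem ZMod.sq_ne_three : ∀ x : ZMod 4, x ^ 2 ≠ 3 := by decide

theorem lucasU_intCast_zmod_four (P Q : ℤ) (hP : Odd P) (hQ4 : Q % 4 = 2) (k : ℕ) :
    (lucasU P Q (2 * k + 2) : ZMod 4) = P ∧ (lucasU P Q (2 * k + 3) : ZMod 4) = 3 := by
  have hQ : (Q : ZMod 4) = 2 := by
    exact_mod_cast (ZMod.intCast_eq_intCast_iff' Q 2 4).mpr hQ4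
  have hP2 := ZMod.intCast_sq_eq_one_of_odd hP
  -- `Q * 1 = Q * 3` modulo 4, so the base case and the inductive step are the same computation.
  have odd_step : ∀ v : ZMod 4, v = 1 ∨ v = 3 → (P : ZMod 4) * P - Q * v = 3 := by
    rw [hQ, ← sq, hP2]
    decide
  induction k with
  | zero =>
    have hEven : (lucasU P Q 2 : ZMod 4) = P := by simp [lucasU]
    refine ⟨hEven, ?_⟩
    rw [lucasU_add_two]
    push_cast
    rw [hEven]
    simpa [lucasU] using odd_step 1 (.inl rfl)
  | succ k ih =>
    obtain ⟨hEven, hOdd⟩ := ih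
    have hEven' : (lucasU P Q (2 * k + 4) : ZMod 4) = P := by
      rw [lucasU_add_two]
      push_cast
      rw [hOdd, hEven, hQ]
      ring
    refine ⟨hEven', ?_⟩
    show (lucasU P Q (2 * k + 3 + 2) : ZMod 4) = 3
    rw [lucasU_add_two]
    push_cast
    rw [hEven', hOdd]
    exact odd_step 3 (.inr rfl)

theorem stmt3 (P Q : ℤ) (n : ℕ) (hP : Odd P) (hn : Odd n) (hn3 : 3 ≤ n)
    (hQ4 : Q % 4 = 2) :
    lucasU P Q n ≡ 3 [ZMOD 4] ∧ ¬ ∃ k : ℤ, lucasU P Q n = k ^ 2 := by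
  obtain ⟨k, rfl⟩ : ∃ k, n = 2 * k + 3 := by
    obtain ⟨m, rfl⟩ := hn
    exact ⟨m - 1, by omega⟩
  have h3 := (lucasU_intCast_zmod_four P Q hP hQ4 k).2
  refine ⟨(ZMod.intCast_eq_intCast_iff _ 3 4).mp (by rw [h3]; rfl), ?_⟩
  rintro ⟨j, hj⟩
  exact ZMod.sq_ne_three j (by rw [← h3, hj]; push_cast; rfl)
end

section
/- If P and Q are odd, n is odd, and Q ≡ 3 (mod 4), then U_n(P,Q) ≡ F_n (mod 4), where F_n is the n-th Fibonacci number. -/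
lemma key9 (P Q : ℤ) (hP : Odd P) (hQ4 : Q % 4 = 3) :
    ∀ n : ℕ, ((P * lucasU P Q (2*n) : ℤ) : ZMod 4) = ((Nat.fib (2*n) : ℤ) : ZMod 4) ∧
      ((lucasU P Q (2*n+1) : ℤ) : ZMod 4) = ((Nat.fib (2*n+1) : ℤ) : ZMod 4) := by
  have cast_eq : ∀ a b : ℤ, a % 4 = b % 4 → ((a : ℤ) : ZMod 4) = ((b : ℤ) : ZMod 4) :=
    fun a b h => (ZMod.intCast_eq_intCast_iff _ _ _).mpr h
  have hQ' : (Q : ZMod 4) = -1 := by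
    have := cast_eq Q 3 (by omega)
    rw [this]; decide
  have hP2 : (P : ZMod 4)^2 = 1 := by
    obtain ⟨k, hk⟩ := hP
    rcases (by omega : P % 4 = 1 ∨ P % 4 = 3) with h | h
    · rw [cast_eq P 1 (by omega)]; decide
    · rw [cast_eq P 3 (by omega)]; decide
  intro n
  induction n with
  | zero => simp [lucasU]
  | succ n ih =>
    obtain ⟨h1, h2⟩ := ih
    have e2 : 2*(n+1) = (2*n)+2 := by ring
    rw [e2]
    have l2 : lucasU P Q (2*n+2) = P * lucasU P Q (2*n+1) - Q * lucasU P Q (2*n) := rfl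
    have l3 : lucasU P Q (2*n+2+1) = P * lucasU P Q (2*n+2) - Q * lucasU P Q (2*n+1) := rfl
    have ha : ((P * lucasU P Q (2*n+2) : ℤ) : ZMod 4) = ((Nat.fib (2*n+2) : ℤ) : ZMod 4) := by
      rw [l2, Nat.fib_add_two]
      push_cast at h1 h2 ⊢
      linear_combination ((lucasU P Q (2*n+1) : ℤ) : ZMod 4) * hP2 + h2 -
        ((P : ZMod 4) * ((lucasU P Q (2*n) : ℤ) : ZMod 4)) * hQ' + h1
    refine ⟨ha, ?_⟩
    rw [l3, show 2*n+2+1 = (2*n+1)+2 from rfl, Nat.fib_add_two]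
    push_cast at h1 h2 ha ⊢
    linear_combination ha - ((lucasU P Q (2*n+1) : ℤ) : ZMod 4) * hQ' + h2

theorem stmt9 (P Q : ℤ) (n : ℕ) (hP : Odd P) (hQ : Odd Q) (hQ4 : Q % 4 = 3)
    (hn : Odd n) :
    lucasU P Q n ≡ (Nat.fib n : ℤ) [ZMOD 4] := by
  obtain ⟨k, rfl⟩ := hn
  exact (ZMod.intCast_eq_intCast_iff _ _ _).mp (key9 P Q hP hQ4 k).2
end

section
/- If P is odd, Q ≡ 1 (mod 4), and n is odd, then U_n(P,Q) ≡ U_n(1,1) (mod 4), where U_n(1,1) is the sequence with recurrence b_n = b_{n-1} − b_{n-2}, b_0 = 0, b_1 = 1. -/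
theorem lucasU_modEq {m P P' Q Q' : ℤ} (hP : P ≡ P' [ZMOD m]) (hQ : Q ≡ Q' [ZMOD m]) (n : ℕ) :
    lucasU P Q n ≡ lucasU P' Q' n [ZMOD m] := by
  induction n using lucasU.induct with
  | case1 | case2 => rfl
  | case3 n ih₁ ih₀ => exact (hP.mul ih₁).sub (hQ.mul ih₀)

theorem lucasU_mul_mul_sq (c P Q : ℤ) (n : ℕ) :
    lucasU (c * P) (c ^ 2 * Q) (n + 1) = c ^ n * lucasU P Q (n + 1) := by
  induction n using Nat.twoStepInduction with
  | zero => simp [lucasU]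
  | one => simp [lucasU]
  | more n ih₀ ih₁ =>
    rw [lucasU, ih₁, ih₀, lucasU.eq_3 P Q (n + 1)]
    ring

theorem stmt10 (P Q : ℤ) (n : ℕ) (hP : Odd P) (hQ4 : Q % 4 = 1) (hn : Odd n) :
    lucasU P Q n ≡ lucasU 1 1 n [ZMOD 4] := by
  obtain ⟨m, rfl⟩ := hn
  have hP2 : P ^ 2 ≡ 1 [ZMOD 4] := Int.sq_mod_four_eq_one_of_odd hP
  have hQ : Q ≡ P ^ 2 * 1 [ZMOD 4] := by
    rw [mul_one]
    exact (hQ4 : Q ≡ 1 [ZMOD 4]).trans hP2.symm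
  calc lucasU P Q (2 * m + 1)
      ≡ lucasU (P * 1) (P ^ 2 * 1) (2 * m + 1) [ZMOD 4] := lucasU_modEq (by rw [mul_one]) hQ _
    _ = (P ^ 2) ^ m * lucasU 1 1 (2 * m + 1) := by rw [lucasU_mul_mul_sq, pow_mul]
    _ ≡ 1 ^ m * lucasU 1 1 (2 * m + 1) [ZMOD 4] := (hP2.pow m).mul_right _
    _ = lucasU 1 1 (2 * m + 1) := by rw [one_pow, one_mul]
end

section
/- If P is odd and Q ≡ 3 (mod 4), then U_15(P,Q) ≡ 2 (mod 4), hence U_15(P,Q) is not a perfect square. -/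
theorem lucasU_fifteen_modEq_two {P Q : ℤ} (hP : Odd P) (hQ : Q ≡ 3 [ZMOD 4]) :
    lucasU P Q 15 ≡ 2 [ZMOD 4] := by
  have hP4 : P % 4 = 1 ∨ P % 4 = 3 := by
    obtain ⟨k, rfl⟩ := hP
    omega
  have h := lucasU_modEq (Int.mod_modEq P 4).symm hQ 15
  rcases hP4 with hP4 | hP4 <;> rw [hP4] at h <;> exact h.trans (by decide)

theorem stmt17 (P Q : ℤ) (hP : Odd P) (hQ4 : Q % 4 = 3) :
    lucasU P Q 15 ≡ 2 [ZMOD 4] ∧ ¬ ∃ k : ℤ, lucasU P Q 15 = k ^ 2 := by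
  have h := lucasU_fifteen_modEq_two hP hQ4
  refine ⟨h, fun ⟨k, hk⟩ => Int.sq_ne_two_mod_four k ?_⟩
  rw [← sq, ← hk]
  exact h
end
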